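/- Let f₁, f₂, f₃, f₄ denote the four theta constants of the second kind f_a(Z) = θ[a,0](2Z) for a = (0,0), (1,0), (0,1), (1,1) respectively, and define F₁ = f₁⁴+f₂⁴+f₃⁴+f₄⁴, F₂ = f₁²f₂²+f₃²f₄², F₃ = f₁²f₃²+f₂²f₄², F₄ = f₁²f₄²+f₂²f₃², F₅ = f₁f₂f₃f₄. Then for every Z in the Siegel upper half space ℍ₂ the relation 16F₅⁴ = −F₁²F₅² + F₁F₂F₃F₄ − F₂²F₃² − F₂²F₄² + 4F₂²F₅² − F₃²F₄² + 4F₃²F₅² + 4F₄²F₅² holds. -/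

import Mathlib

open Matrix Complex

/-- The Siegel upper half space of genus 2: symmetric complex 2×2 matrices with
positive definite imaginary part. -/
def SiegelH2 : Set (Matrix (Fin 2) (Fin 2) ℂ) :=
  {Z | Z.IsSymm ∧ (Matrix.of fun i j => (Z i j).im).PosDef}

/-- The summand of the theta series with characteristic `(a,b)`:
`exp(πi((g+a/2)ᵀ Z (g+a/2) + bᵀ(g+a/2)))`. -/
noncomputable def thetaTerm (a b : Fin 2 → ℤ) (Z : Matrix (Fin 2) (Fin 2) ℂ)
    (g : Fin 2 → ℤ) : ℂ :=
  Complex.exp (Real.pi * Complex.I *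
    ((∑ i, ∑ j, ((g i : ℂ) + (a i : ℂ) / 2) * Z i j * ((g j : ℂ) + (a j : ℂ) / 2)) +
      ∑ i, (b i : ℂ) * ((g i : ℂ) + (a i : ℂ) / 2)))

/-- The theta constant `θ[a,b](Z) = Σ_{g∈ℤ²} exp(πi((g+a/2)ᵀ Z (g+a/2) + bᵀ(g+a/2)))`. -/
noncomputable def theta (a b : Fin 2 → ℤ) (Z : Matrix (Fin 2) (Fin 2) ℂ) : ℂ :=
  ∑' g : Fin 2 → ℤ, thetaTerm a b Z g

/-- The theta constants of the second kind `f_a(Z) = θ[a,0](2Z)`. -/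
noncomputable def thetaSecond (a : Fin 2 → ℤ) (Z : Matrix (Fin 2) (Fin 2) ℂ) : ℂ :=
  theta a 0 ((2 : ℂ) • Z)

/-- `f₁ = f_{(0,0)}`. -/
noncomputable def f₁ (Z : Matrix (Fin 2) (Fin 2) ℂ) : ℂ := thetaSecond ![0, 0] Z
/-- `f₂ = f_{(1,0)}`. -/
noncomputable def f₂ (Z : Matrix (Fin 2) (Fin 2) ℂ) : ℂ := thetaSecond ![1, 0] Z
/-- `f₃ = f_{(0,1)}`. -/
noncomputable def f₃ (Z : Matrix (Fin 2) (Fin 2) ℂ) : ℂ := thetaSecond ![0, 1] Z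
/-- `f₄ = f_{(1,1)}`. -/
noncomputable def f₄ (Z : Matrix (Fin 2) (Fin 2) ℂ) : ℂ := thetaSecond ![1, 1] Z

/-- Runge's generator `F₁ = f₁⁴+f₂⁴+f₃⁴+f₄⁴`. -/
noncomputable def F₁ (Z : Matrix (Fin 2) (Fin 2) ℂ) : ℂ :=
  f₁ Z ^ 4 + f₂ Z ^ 4 + f₃ Z ^ 4 + f₄ Z ^ 4
/-- Runge's generator `F₂ = f₁²f₂²+f₃²f₄²`. -/
noncomputable def F₂ (Z : Matrix (Fin 2) (Fin 2) ℂ) : ℂ :=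
  f₁ Z ^ 2 * f₂ Z ^ 2 + f₃ Z ^ 2 * f₄ Z ^ 2
/-- Runge's generator `F₃ = f₁²f₃²+f₂²f₄²`. -/
noncomputable def F₃ (Z : Matrix (Fin 2) (Fin 2) ℂ) : ℂ :=
  f₁ Z ^ 2 * f₃ Z ^ 2 + f₂ Z ^ 2 * f₄ Z ^ 2
/-- Runge's generator `F₄ = f₁²f₄²+f₂²f₃²`. -/
noncomputable def F₄ (Z : Matrix (Fin 2) (Fin 2) ℂ) : ℂ :=
  f₁ Z ^ 2 * f₄ Z ^ 2 + f₂ Z ^ 2 * f₃ Z ^ 2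
/-- Runge's generator `F₅ = f₁f₂f₃f₄`. -/
noncomputable def F₅ (Z : Matrix (Fin 2) (Fin 2) ℂ) : ℂ :=
  f₁ Z * f₂ Z * f₃ Z * f₄ Z

theorem runge_quartic_identity {R : Type*} [CommRing R] (a b c d : R) :
    let F₁ := a ^ 4 + b ^ 4 + c ^ 4 + d ^ 4
    let F₂ := a ^ 2 * b ^ 2 + c ^ 2 * d ^ 2
    let F₃ := a ^ 2 * c ^ 2 + b ^ 2 * d ^ 2
    let F₄ := a ^ 2 * d ^ 2 + b ^ 2 * c ^ 2
    let F₅ := a * b * c * d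
    16 * F₅ ^ 4 =
      -(F₁ ^ 2 * F₅ ^ 2) + F₁ * F₂ * F₃ * F₄ - F₂ ^ 2 * F₃ ^ 2
        - F₂ ^ 2 * F₄ ^ 2 + 4 * F₂ ^ 2 * F₅ ^ 2 - F₃ ^ 2 * F₄ ^ 2
        + 4 * F₃ ^ 2 * F₅ ^ 2 + 4 * F₄ ^ 2 * F₅ ^ 2 := by
  intros
  ring

theorem stmt_13_general (Z : Matrix (Fin 2) (Fin 2) ℂ) :
    16 * F₅ Z ^ 4 =
      -(F₁ Z ^ 2 * F₅ Z ^ 2) + F₁ Z * F₂ Z * F₃ Z * F₄ Z - F₂ Z ^ 2 * F₃ Z ^ 2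
        - F₂ Z ^ 2 * F₄ Z ^ 2 + 4 * F₂ Z ^ 2 * F₅ Z ^ 2 - F₃ Z ^ 2 * F₄ Z ^ 2
        + 4 * F₃ Z ^ 2 * F₅ Z ^ 2 + 4 * F₄ Z ^ 2 * F₅ Z ^ 2 :=
  runge_quartic_identity (f₁ Z) (f₂ Z) (f₃ Z) (f₄ Z)

/-- Runge's defining quartic relation among `F₁,…,F₅` holds at every `Z ∈ ℍ₂`. -/
theorem stmt_13 (Z : Matrix (Fin 2) (Fin 2) ℂ) (hZ : Z ∈ SiegelH2) :
    16 * F₅ Z ^ 4 =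
      -(F₁ Z ^ 2 * F₅ Z ^ 2) + F₁ Z * F₂ Z * F₃ Z * F₄ Z - F₂ Z ^ 2 * F₃ Z ^ 2
        - F₂ Z ^ 2 * F₄ Z ^ 2 + 4 * F₂ Z ^ 2 * F₅ Z ^ 2 - F₃ Z ^ 2 * F₄ Z ^ 2
        + 4 * F₃ Z ^ 2 * F₅ Z ^ 2 + 4 * F₄ Z ^ 2 * F₅ Z ^ 2 :=
  stmt_13_general Z
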